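/- For the Werner-state box P = p·[(1/√2)P_PR^{000} + (1−1/√2)P_N] + (1−p)·P_N and for the Werner Mermin box P' = p·(1/2)(P_PR^{000}+P_PR^{111}) + (1−p)·P_N (0 ≤ p ≤ 1), one has T(P) = G(P) = 2√2 p with Q(P) = 0, and T(P') = Q(P') = 2p with G(P') = 0; in both cases T = G + Q, i.e., the classical-correlation term C = G + Q − T vanishes. -/

import Mathlib

open scoped Matrix Kronecker

noncomputable section

/-- A bipartite box: `P i j m n` is the probability of outputs `m,n` given inputs `i,j`. -/
abbrev Box := Fin 2 → Fin 2 → Fin 2 → Fin 2 → ℝ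

/-- A box has nonnegative entries, normalized for every input pair. -/
def IsBox (P : Box) : Prop :=
  (∀ i j m n, 0 ≤ P i j m n) ∧ ∀ i j, (∑ m, ∑ n, P i j m n) = 1

/-- Nonsignaling conditions. -/
def NonSignaling (P : Box) : Prop :=
  (∀ i j j' m, (∑ n, P i j m n) = ∑ n, P i j' m n) ∧
  (∀ i i' j n, (∑ m, P i j m n) = ∑ m, P i' j m n)

/-- `(-1)^k` for a bit `k`. -/
def sgn (k : Fin 2) : ℝ := (-1 : ℝ) ^ (k : ℕ)

/-- Correlator `⟨A_i B_j⟩`. -/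
def corr (P : Box) (i j : Fin 2) : ℝ := ∑ m, ∑ n, sgn (m + n) * P i j m n

/-- Marginal expectation `⟨A_i⟩` of Alice. -/
def margA (P : Box) (i : Fin 2) : ℝ := ∑ m, ∑ n, sgn m * P i 0 m n

/-- Marginal expectation `⟨B_j⟩` of Bob. -/
def margB (P : Box) (j : Fin 2) : ℝ := ∑ m, ∑ n, sgn n * P 0 j m n

/-- The PR boxes `P_PR^{αβγ}`. -/
def PRbox (a b g : Fin 2) : Box :=
  fun i j m n => if m + n = i * j + a * i + b * j + g then 1/2 else 0

/-- The local deterministic boxes `P_D^{αβγε}`. -/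
def Dbox (a b g e : Fin 2) : Box :=
  fun i j m n => if m = a * i + b ∧ n = g * j + e then 1 else 0

/-- The white-noise box `P_N`. -/
def whiteNoise : Box := fun _ _ _ _ => 1/4

/-- The signed Bell-CHSH functions `B_{αβγ}`. -/
def BellF (P : Box) (a b g : Fin 2) : ℝ :=
  sgn g * corr P 0 0 + sgn (b + g) * corr P 0 1 + sgn (a + g) * corr P 1 0 +
    sgn (a + b + g + 1) * corr P 1 1

/-- The Bell distances `B_{αβ} = max_γ |B_{αβγ}|`. -/
def BellD (P : Box) (a b : Fin 2) : ℝ := max |BellF P a b 0| |BellF P a b 1|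

/-- Bell discord `G`. -/
def BellDiscord (P : Box) : ℝ :=
  min (min (|(|BellD P 0 0 - BellD P 0 1| - |BellD P 1 0 - BellD P 1 1|)|)
           (|(|BellD P 0 0 - BellD P 1 0| - |BellD P 0 1 - BellD P 1 1|)|))
      (|(|BellD P 0 0 - BellD P 1 1| - |BellD P 0 1 - BellD P 1 0|)|)

/-- The signed Mermin functions `M_{αβγ}`. -/
def MerminF (P : Box) (a b g : Fin 2) : ℝ :=
  if a = 0 ∧ b = 0 then sgn g * (corr P 0 1 + corr P 1 0)
  else if a = 0 ∧ b = 1 then sgn g * (corr P 0 0 + corr P 1 1)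
  else if a = 1 ∧ b = 0 then sgn g * (corr P 0 1 - corr P 1 0)
  else sgn g * (corr P 0 0 - corr P 1 1)

/-- The Mermin distances `M_{αβ} = max_γ |M_{αβγ}|`. -/
def MerminD (P : Box) (a b : Fin 2) : ℝ := max |MerminF P a b 0| |MerminF P a b 1|

/-- Mermin discord `Q`. -/
def MerminDiscord (P : Box) : ℝ :=
  min (min (|(|MerminD P 0 0 - MerminD P 0 1| - |MerminD P 1 0 - MerminD P 1 1|)|)
           (|(|MerminD P 0 0 - MerminD P 1 0| - |MerminD P 0 1 - MerminD P 1 1|)|))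
      (|(|MerminD P 0 0 - MerminD P 1 1| - |MerminD P 0 1 - MerminD P 1 0|)|)

/-- The signed product Bell expressions, built from products of marginal expectations. -/
def BellProdF (P : Box) (a b : Fin 2) : ℝ :=
  margA P 0 * margB P 0 + sgn b * (margA P 0 * margB P 1) + sgn a * (margA P 1 * margB P 0) +
    sgn (a + b + 1) * (margA P 1 * margB P 1)

/-- `B^{prod}_{αβ}`. -/
def BellProdD (P : Box) (a b : Fin 2) : ℝ := |BellProdF P a b|

/-- The total-correlation measure `T = max_{αβ} |B_{αβ} - B^{prod}_{αβ}|`. -/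
def Tmeasure (P : Box) : ℝ :=
  max (max (|BellD P 0 0 - BellProdD P 0 0|) (|BellD P 0 1 - BellProdD P 0 1|))
      (max (|BellD P 1 0 - BellProdD P 1 0|) (|BellD P 1 1 - BellProdD P 1 1|))

/-- A product box: the joint distribution factorizes into marginal distributions. -/
def IsProduct (P : Box) : Prop :=
  ∃ PA PB : Fin 2 → Fin 2 → ℝ,
    (∀ i m, 0 ≤ PA i m) ∧ (∀ i, ∑ m, PA i m = 1) ∧
    (∀ j n, 0 ≤ PB j n) ∧ (∀ j, ∑ n, PB j n = 1) ∧
    ∀ i j m n, P i j m n = PA i m * PB j n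

/-- A local box: a convex combination of local deterministic boxes. -/
def IsLocal (P : Box) : Prop :=
  ∃ q : Fin 2 → Fin 2 → Fin 2 → Fin 2 → ℝ,
    (∀ a b g e, 0 ≤ q a b g e) ∧ (∑ a, ∑ b, ∑ g, ∑ e, q a b g e) = 1 ∧
    ∀ i j m n, P i j m n = ∑ a, ∑ b, ∑ g, ∑ e, q a b g e * Dbox a b g e i j m n

/-- Local reversible operation (relabeling of inputs and, conditionally, outputs). -/
def relabel (sA a b sB c d : Fin 2) (P : Box) : Box :=
  fun i j m n => P (i + sA) (j + sB) (m + a * i + b) (n + c * j + d)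

/-- Pauli matrices. -/
def σx : Matrix (Fin 2) (Fin 2) ℂ := !![0, 1; 1, 0]
def σy : Matrix (Fin 2) (Fin 2) ℂ := !![0, -Complex.I; Complex.I, 0]
def σz : Matrix (Fin 2) (Fin 2) ℂ := !![1, 0; 0, -1]

/-- The observable `â · σ⃗` for a direction `â = (a_x, a_y, a_z)`. -/
def obs (v : ℝ × ℝ × ℝ) : Matrix (Fin 2) (Fin 2) ℂ :=
  (v.1 : ℂ) • σx + (v.2.1 : ℂ) • σy + (v.2.2 : ℂ) • σz

/-- Quantum correlator `⟨A ⊗ B⟩_ρ = Tr(ρ (A ⊗ B))`. -/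
def qCorr (ρ : Matrix (Fin 2 × Fin 2) (Fin 2 × Fin 2) ℂ)
    (A B : Matrix (Fin 2) (Fin 2) ℂ) : ℝ := (Matrix.trace (ρ * (A ⊗ₖ B))).re

/-- Projector onto the `(-1)^m` eigenspace of a ±1-valued observable `A`. -/
def projOut (A : Matrix (Fin 2) (Fin 2) ℂ) (m : Fin 2) : Matrix (Fin 2) (Fin 2) ℂ :=
  (2⁻¹ : ℂ) • ((1 : Matrix (Fin 2) (Fin 2) ℂ) + ((-1 : ℂ) ^ (m : ℕ)) • A)

/-- The quantum box determined by a two-qubit state and local observables. -/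
def qBox (ρ : Matrix (Fin 2 × Fin 2) (Fin 2 × Fin 2) ℂ)
    (A0 A1 B0 B1 : Matrix (Fin 2) (Fin 2) ℂ) : Box :=
  fun i j m n =>
    (Matrix.trace (ρ * ((projOut (if i = 0 then A0 else A1) m) ⊗ₖ
      (projOut (if j = 0 then B0 else B1) n)))).re

/-- The Bell state `|ψ⁺⟩ = (|00⟩ + |11⟩)/√2` as a density matrix. -/
def ρBell : Matrix (Fin 2 × Fin 2) (Fin 2 × Fin 2) ℂ :=
  Matrix.of fun x y =>
    (if x.1 = x.2 then ((Real.sqrt 2)⁻¹ : ℂ) else 0) *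
      (if y.1 = y.2 then ((Real.sqrt 2)⁻¹ : ℂ) else 0)

/-- The Schmidt state `ρ_S` with parameters `c = cos 2θ`, `s = sin 2θ`. -/
def ρSchmidt (c s : ℝ) : Matrix (Fin 2 × Fin 2) (Fin 2 × Fin 2) ℂ :=
  (4⁻¹ : ℂ) • ((1 : Matrix (Fin 2 × Fin 2) (Fin 2 × Fin 2) ℂ)
    + (c : ℂ) • (σz ⊗ₖ (1 : Matrix (Fin 2) (Fin 2) ℂ) + (1 : Matrix (Fin 2) (Fin 2) ℂ) ⊗ₖ σz)
    + (s : ℂ) • (σx ⊗ₖ σx - σy ⊗ₖ σy) + σz ⊗ₖ σz)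

/-! Every box here has vanishing marginals, so `T` is the largest Bell distance and all three
quantities are functions of the four correlators `E_ij`. Since flipping `γ` only flips the sign of
`B_αβγ` and `M_αβγ`, each distance is the absolute value of one signed sum of correlators. The
Werner box has `E_ij = (p/√2)(-1)^{ij}`, a multiple of the `PR^{000}` correlators, so only `B_00`
survives (equal to `4p/√2 = 2√2 p`) and `M_00 = M_11` cancel in every pairing. The Werner Mermin
box has `E_ij = p` off the diagonal and `0` on it, so `B_00 = B_11` cancel and only `M_00 = 2p`
survives. -/

open Finset

@[simp] lemma sgn_zero : sgn 0 = 1 := by simp [sgn]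

@[simp] lemma sgn_one : sgn 1 = -1 := by simp [sgn]

lemma sgn_add (k l : Fin 2) : sgn (k + l) = sgn k * sgn l := by
  fin_cases k <;> fin_cases l <;> simp [sgn]

lemma sgn_add_one (k : Fin 2) : sgn (k + 1) = -sgn k := by
  simp [sgn_add]

lemma corr_add (P Q : Box) (i j : Fin 2) : corr (P + Q) i j = corr P i j + corr Q i j := by
  simp only [corr, Pi.add_apply, mul_add, sum_add_distrib]

lemma corr_smul (c : ℝ) (P : Box) (i j : Fin 2) : corr (c • P) i j = c * corr P i j := by
  simp only [corr, Pi.smul_apply, smul_eq_mul, mul_sum, mul_left_comm]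

lemma margA_add (P Q : Box) (i : Fin 2) : margA (P + Q) i = margA P i + margA Q i := by
  simp only [margA, Pi.add_apply, mul_add, sum_add_distrib]

lemma margA_smul (c : ℝ) (P : Box) (i : Fin 2) : margA (c • P) i = c * margA P i := by
  simp only [margA, Pi.smul_apply, smul_eq_mul, mul_sum, mul_left_comm]

lemma corr_PRbox (a b g i j : Fin 2) :
    corr (PRbox a b g) i j = sgn (i * j + a * i + b * j + g) := by
  unfold corr PRbox
  generalize i * j + a * i + b * j + g = k
  fin_cases k <;> simp [Fin.sum_univ_two] <;> norm_num

lemma margA_PRbox (a b g i : Fin 2) : margA (PRbox a b g) i = 0 := by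
  unfold margA PRbox
  generalize i * 0 + a * i + b * 0 + g = k
  fin_cases k <;> simp [Fin.sum_univ_two]

lemma corr_whiteNoise (i j : Fin 2) : corr whiteNoise i j = 0 := by
  simp [corr, whiteNoise, Fin.sum_univ_two]

lemma margA_whiteNoise (i : Fin 2) : margA whiteNoise i = 0 := by
  simp [margA, whiteNoise, Fin.sum_univ_two]

lemma BellF_one (P : Box) (a b : Fin 2) : BellF P a b 1 = -BellF P a b 0 := by
  simp only [BellF, sgn_add_one, add_zero, sgn_one, sgn_zero]
  ring

lemma MerminF_one (P : Box) (a b : Fin 2) : MerminF P a b 1 = -MerminF P a b 0 := by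
  unfold MerminF
  split_ifs <;> simp

lemma BellD_eq_abs (P : Box) (a b : Fin 2) : BellD P a b = |BellF P a b 0| := by
  rw [BellD, BellF_one, abs_neg, max_self]

lemma MerminD_eq_abs (P : Box) (a b : Fin 2) : MerminD P a b = |MerminF P a b 0| := by
  rw [MerminD, MerminF_one, abs_neg, max_self]

lemma BellD_zero_zero (P : Box) :
    BellD P 0 0 = |corr P 0 0 + corr P 0 1 + corr P 1 0 - corr P 1 1| := by
  simp [BellD_eq_abs, BellF, sub_eq_add_neg]

lemma BellD_zero_one (P : Box) :
    BellD P 0 1 = |corr P 0 0 - corr P 0 1 + corr P 1 0 + corr P 1 1| := by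
  simp [BellD_eq_abs, BellF, sub_eq_add_neg]

lemma BellD_one_zero (P : Box) :
    BellD P 1 0 = |corr P 0 0 + corr P 0 1 - corr P 1 0 + corr P 1 1| := by
  simp [BellD_eq_abs, BellF, sub_eq_add_neg]

lemma BellD_one_one (P : Box) :
    BellD P 1 1 = |corr P 0 0 - corr P 0 1 - corr P 1 0 - corr P 1 1| := by
  simp [BellD_eq_abs, BellF, sub_eq_add_neg]

lemma MerminD_zero_zero (P : Box) : MerminD P 0 0 = |corr P 0 1 + corr P 1 0| := by
  simp [MerminD_eq_abs, MerminF]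

lemma MerminD_zero_one (P : Box) : MerminD P 0 1 = |corr P 0 0 + corr P 1 1| := by
  simp [MerminD_eq_abs, MerminF]

lemma MerminD_one_zero (P : Box) : MerminD P 1 0 = |corr P 0 1 - corr P 1 0| := by
  simp [MerminD_eq_abs, MerminF]

lemma MerminD_one_one (P : Box) : MerminD P 1 1 = |corr P 0 0 - corr P 1 1| := by
  simp [MerminD_eq_abs, MerminF]

lemma Tmeasure_eq_of_margA_eq_zero {P : Box} (hA : ∀ i, margA P i = 0) :
    Tmeasure P = max (max (BellD P 0 0) (BellD P 0 1)) (max (BellD P 1 0) (BellD P 1 1)) := by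
  have hprod : ∀ a b, BellProdD P a b = 0 := fun a b => by simp [BellProdD, BellProdF, hA]
  simp only [Tmeasure, hprod, sub_zero, BellD_eq_abs, abs_abs]

section

variable {P : Box} {c : ℝ}

lemma BellDiscord_eq_of_corr_eq_mul_sgn (h : ∀ i j, corr P i j = c * sgn (i * j)) :
    BellDiscord P = 4 * |c| := by
  simp only [BellDiscord, BellD_zero_zero, BellD_zero_one, BellD_one_zero,
    BellD_one_one, h]
  norm_num
  rw [show c + c + c + c = 4 * c by ring, abs_mul, abs_of_pos four_pos]

lemma MerminDiscord_eq_zero_of_corr_eq_mul_sgn (h : ∀ i j, corr P i j = c * sgn (i * j)) :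
    MerminDiscord P = 0 := by
  simp only [MerminDiscord, MerminD_zero_zero, MerminD_zero_one, MerminD_one_zero,
    MerminD_one_one, h]
  norm_num

lemma Tmeasure_eq_of_corr_eq_mul_sgn (hA : ∀ i, margA P i = 0)
    (h : ∀ i j, corr P i j = c * sgn (i * j)) : Tmeasure P = 4 * |c| := by
  simp only [Tmeasure_eq_of_margA_eq_zero hA, BellD_zero_zero, BellD_zero_one, BellD_one_zero,
    BellD_one_one, h]
  norm_num
  rw [show c + c + c + c = 4 * c by ring, abs_mul, abs_of_pos four_pos]

lemma BellDiscord_eq_zero_of_corr_eq_ite (h : ∀ i j, corr P i j = if i = j then 0 else c) :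
    BellDiscord P = 0 := by
  simp only [BellDiscord, BellD_zero_zero, BellD_zero_one, BellD_one_zero,
    BellD_one_one, h]
  norm_num [abs_mul, ← two_mul, ← neg_add']

lemma MerminDiscord_eq_of_corr_eq_ite (h : ∀ i j, corr P i j = if i = j then 0 else c) :
    MerminDiscord P = 2 * |c| := by
  simp only [MerminDiscord, MerminD_zero_zero, MerminD_zero_one, MerminD_one_zero,
    MerminD_one_one, h]
  norm_num [abs_mul, ← two_mul, ← neg_add']

lemma Tmeasure_eq_of_corr_eq_ite (hA : ∀ i, margA P i = 0)
    (h : ∀ i j, corr P i j = if i = j then 0 else c) : Tmeasure P = 2 * |c| := by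
  simp only [Tmeasure_eq_of_margA_eq_zero hA, BellD_zero_zero, BellD_zero_one, BellD_one_zero,
    BellD_one_one, h]
  norm_num [abs_mul, ← two_mul, ← neg_add']

end

def wernerBellBox (p : ℝ) : Box :=
  p • ((Real.sqrt 2)⁻¹ • PRbox 0 0 0 + (1 - (Real.sqrt 2)⁻¹) • whiteNoise) +
    (1 - p) • whiteNoise

def wernerMerminBox (p : ℝ) : Box :=
  p • ((1/2 : ℝ) • PRbox 0 0 0 + (1/2 : ℝ) • PRbox 1 1 1) + (1 - p) • whiteNoise

lemma margA_wernerBellBox (p : ℝ) (i : Fin 2) : margA (wernerBellBox p) i = 0 := by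
  simp [wernerBellBox, margA_add, margA_smul, margA_PRbox, margA_whiteNoise]

lemma margA_wernerMerminBox (p : ℝ) (i : Fin 2) : margA (wernerMerminBox p) i = 0 := by
  simp [wernerMerminBox, margA_add, margA_smul, margA_PRbox, margA_whiteNoise]

lemma corr_wernerBellBox (p : ℝ) (i j : Fin 2) :
    corr (wernerBellBox p) i j = p * (Real.sqrt 2)⁻¹ * sgn (i * j) := by
  simp only [wernerBellBox, smul_add, corr_add, corr_smul, corr_PRbox, corr_whiteNoise, zero_mul,
    add_zero, mul_zero]
  ring

lemma corr_wernerMerminBox (p : ℝ) (i j : Fin 2) :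
    corr (wernerMerminBox p) i j = if i = j then 0 else p := by
  fin_cases i <;> fin_cases j <;>
    simp [wernerMerminBox, corr_add, corr_smul, corr_PRbox, corr_whiteNoise] <;> ring

theorem stmt19_general (p : ℝ) (h0 : 0 ≤ p) :
    let P : Box := p • ((Real.sqrt 2)⁻¹ • PRbox 0 0 0 +
      (1 - (Real.sqrt 2)⁻¹) • whiteNoise) + (1 - p) • whiteNoise
    let P' : Box :=
      p • ((1/2 : ℝ) • PRbox 0 0 0 + (1/2 : ℝ) • PRbox 1 1 1) + (1 - p) • whiteNoise
    Tmeasure P = 2 * Real.sqrt 2 * p ∧ BellDiscord P = 2 * Real.sqrt 2 * p ∧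
      MerminDiscord P = 0 ∧
      Tmeasure P' = 2 * p ∧ MerminDiscord P' = 2 * p ∧ BellDiscord P' = 0 ∧
      Tmeasure P = BellDiscord P + MerminDiscord P ∧
      Tmeasure P' = BellDiscord P' + MerminDiscord P' := by
  intro P P'
  have hA : ∀ i, margA P i = 0 := margA_wernerBellBox p
  have hA' : ∀ i, margA P' i = 0 := margA_wernerMerminBox p
  have hC : ∀ i j, corr P i j = p * (Real.sqrt 2)⁻¹ * sgn (i * j) := corr_wernerBellBox p
  have hC' : ∀ i j, corr P' i j = if i = j then 0 else p := corr_wernerMerminBox p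
  have hval : 4 * |p * (Real.sqrt 2)⁻¹| = 2 * Real.sqrt 2 * p := by
    rw [abs_of_nonneg (by positivity)]
    field_simp
    linear_combination -2 * p * Real.mul_self_sqrt zero_le_two
  rw [Tmeasure_eq_of_corr_eq_mul_sgn hA hC, BellDiscord_eq_of_corr_eq_mul_sgn hC,
    MerminDiscord_eq_zero_of_corr_eq_mul_sgn hC, Tmeasure_eq_of_corr_eq_ite hA' hC',
    BellDiscord_eq_zero_of_corr_eq_ite hC', MerminDiscord_eq_of_corr_eq_ite hC', hval,
    abs_of_nonneg h0]
  simp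

/-- for the Werner Bell box `P = p[(1/√2)PR^{000}+(1−1/√2)P_N]+(1−p)P_N`
and the Werner Mermin box `P' = p(1/2)(PR^{000}+PR^{111})+(1−p)P_N`:
`T(P) = G(P) = 2√2 p`, `Q(P) = 0`, `T(P') = Q(P') = 2p`, `G(P') = 0`;
in both cases `T = G + Q`, i.e. the classical-correlation term vanishes. -/
theorem stmt19 (p : ℝ) (h0 : 0 ≤ p) (h1 : p ≤ 1) :
    let P : Box := p • ((Real.sqrt 2)⁻¹ • PRbox 0 0 0 +
      (1 - (Real.sqrt 2)⁻¹) • whiteNoise) + (1 - p) • whiteNoise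
    let P' : Box :=
      p • ((1/2 : ℝ) • PRbox 0 0 0 + (1/2 : ℝ) • PRbox 1 1 1) + (1 - p) • whiteNoise
    Tmeasure P = 2 * Real.sqrt 2 * p ∧ BellDiscord P = 2 * Real.sqrt 2 * p ∧
      MerminDiscord P = 0 ∧
      Tmeasure P' = 2 * p ∧ MerminDiscord P' = 2 * p ∧ BellDiscord P' = 0 ∧
      Tmeasure P = BellDiscord P + MerminDiscord P ∧
      Tmeasure P' = BellDiscord P' + MerminDiscord P' :=
  stmt19_general p h0
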